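/- For all s ≥ 4, m ∈ {1,2} and j ∈ {1,2,3}, the chromatic index of H^{-3,s}_{m,j} equals s+1. -/

import Mathlib

/-- The integral sum graph on vertex set `{r, ..., s} ⊆ ℤ`:
distinct `u, v` are adjacent iff `u + v` also lies in `{r, ..., s}`. -/
def intervalSumGraph (r s : ℤ) : SimpleGraph ℤ where
  Adj u v := u ≠ v ∧ u ∈ Set.Icc r s ∧ v ∈ Set.Icc r s ∧ u + v ∈ Set.Icc r s
  symm := ⟨by
    rintro u v ⟨h1, h2, h3, h4⟩
    exact ⟨h1.symm, h3, h2, by rwa [add_comm]⟩⟩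
  loopless := ⟨fun u h => h.1 rfl⟩

/-- The graph `H^{-i,s}_{m,j}`: obtained from the integral sum graph `G_{-i,s}`
by deleting the vertices `-m` and `j` and all edges whose endpoint labels sum
to `-m` or to `j`. -/
def HGraph (i s m j : ℤ) : SimpleGraph ℤ where
  Adj u v := u ≠ v ∧ u ∈ Set.Icc (-i) s ∧ v ∈ Set.Icc (-i) s ∧ u + v ∈ Set.Icc (-i) s ∧
    u ≠ -m ∧ v ≠ -m ∧ u ≠ j ∧ v ≠ j ∧ u + v ≠ -m ∧ u + v ≠ j
  symm := ⟨by
    rintro u v ⟨h1, h2, h3, h4, h5, h6, h7, h8, h9, h10⟩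
    exact ⟨h1.symm, h3, h2, by rwa [add_comm], h6, h5, h8, h7,
      by rwa [add_comm], by rwa [add_comm]⟩⟩
  loopless := ⟨fun u h => h.1 rfl⟩

/-- The chromatic index of a graph: the least `n` such that there is a proper
edge coloring with `n` colors (distinct edges sharing a vertex get distinct colors). -/
noncomputable def chromaticIndex {V : Type*} (G : SimpleGraph V) : ℕ :=
  sInf {n : ℕ | ∃ c : Sym2 V → Fin n,
    ∀ e ∈ G.edgeSet, ∀ f ∈ G.edgeSet, e ≠ f → (∃ v, v ∈ e ∧ v ∈ f) → c e ≠ c f}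

/-- The sum of the two endpoint labels of an edge. -/
def edgeSum (e : Sym2 ℤ) : ℤ := Sym2.lift ⟨fun a b => a + b, fun a b => add_comm a b⟩ e

/-- The edge-sum chromatic number: the number of nonempty edge-sum color classes. -/
noncomputable def edgeSumChromatic (G : SimpleGraph ℤ) : ℕ :=
  {k : ℤ | ∃ e ∈ G.edgeSet, edgeSum e = k}.ncard

/-!
Vertex `0` is adjacent to all `s + 1` other vertices of `H^{-3,s}_{m,j}`, so `s + 1` colors are
needed. Conversely, relabel the `s + 1` vertices other than `s` bijectively onto `ZMod (s + 1)`,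
color an edge `uv` by `u + v` and treat `s` as a point at infinity, an edge `us` getting `2u`.
Two edges at a common vertex other than `s` then get different colors by cancellation, and the
edges at `s` do too because its neighbours lie in `{-3, …, 0}`, whose labels `0, 1, 2` have
distinct doubles modulo `s + 1 ≥ 5`.
-/

section EdgeColoring

variable {V α : Type*} {G : SimpleGraph V} {c : Sym2 V → α}

def IsProperEdgeColoring (G : SimpleGraph V) (c : Sym2 V → α) : Prop :=
  ∀ e ∈ G.edgeSet, ∀ f ∈ G.edgeSet, e ≠ f → (∃ v, v ∈ e ∧ v ∈ f) → c e ≠ c f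

theorem IsProperEdgeColoring.of_adj
    (h : ∀ u v w, G.Adj u v → G.Adj u w → v ≠ w → c s(u, v) ≠ c s(u, w)) :
    IsProperEdgeColoring G c := by
  intro e he f hf hef ⟨z, hze, hzf⟩
  obtain ⟨v, rfl⟩ := Sym2.mem_iff_exists.mp hze
  obtain ⟨w, rfl⟩ := Sym2.mem_iff_exists.mp hzf
  exact h z v w he hf fun hvw => hef (hvw ▸ rfl)

theorem IsProperEdgeColoring.card_le [Fintype α] (hc : IsProperEdgeColoring G c) {v : V}
    {T : Finset V} (hT : ∀ w ∈ T, G.Adj v w) : T.card ≤ Fintype.card α := by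
  have hinj : Set.InjOn (fun w => c s(v, w)) T := by
    intro w hw w' hw' heq
    by_contra hne
    exact hc _ (hT w hw) _ (hT w' hw') (fun h => hne (Sym2.congr_right.mp h))
      ⟨v, Sym2.mem_mk_left v w, Sym2.mem_mk_left v w'⟩ heq
  simpa using Finset.card_le_card_of_injOn _ (fun _ _ => Finset.mem_univ _) hinj

theorem IsProperEdgeColoring.exists_fin [Fintype α] (hc : IsProperEdgeColoring G c) :
    ∃ d : Sym2 V → Fin (Fintype.card α), IsProperEdgeColoring G d :=
  ⟨fun e => Fintype.equivFin α (c e), fun e he f hf hef hv heq =>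
    hc e he f hf hef hv ((Fintype.equivFin α).injective heq)⟩

theorem chromaticIndex_le [Fintype α] (hc : IsProperEdgeColoring G c) :
    chromaticIndex G ≤ Fintype.card α :=
  Nat.sInf_le hc.exists_fin

theorem chromaticIndex_eq_card [Fintype α] (hc : IsProperEdgeColoring G c) {v : V}
    {T : Finset V} (hT : ∀ w ∈ T, G.Adj v w) (hcard : T.card = Fintype.card α) :
    chromaticIndex G = Fintype.card α := by
  refine (chromaticIndex_le hc).antisymm (le_csInf ⟨_, hc.exists_fin⟩ ?_)
  rintro n ⟨d, hd⟩
  simpa [hcard] using IsProperEdgeColoring.card_le (c := d) hd hT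

end EdgeColoring

section SumColoring

variable {V R : Type*} [DecidableEq V] [AddCancelCommMonoid R]

/-- The classical edge coloring of `K_{n+1}` on `ZMod n ∪ {∞}`, `uv ↦ σ u + σ v` and
`u∞ ↦ 2 σ u`, with `x` playing the role of `∞`. -/
def sumColoring (σ : V → R) (x : V) : Sym2 V → R :=
  Sym2.lift ⟨fun u v => if u = x then σ v + σ v else if v = x then σ u + σ u else σ u + σ v,
    fun u v => by dsimp only; split_ifs <;> simp_all [add_comm]⟩

theorem isProperEdgeColoring_sumColoring {G : SimpleGraph V} {σ : V → R} {x : V}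
    (hσ : Set.InjOn σ (G.support \ {x}))
    (hx : Set.InjOn (fun v => σ v + σ v) (G.neighborSet x)) :
    IsProperEdgeColoring G (sumColoring σ x) := by
  refine IsProperEdgeColoring.of_adj fun u v w huv huw hvw heq => ?_
  have mem {a b : V} (hab : G.Adj a b) (ha : a ≠ x) : a ∈ G.support \ {x} :=
    ⟨hab.mem_support_left, ha⟩
  simp only [sumColoring, Sym2.lift_mk] at heq
  by_cases hu : u = x
  · subst hu
    simp only [if_true] at heq
    exact hvw (hx huv huw heq)
  by_cases hv : v = x
  · subst hv
    have hw : w ≠ v := fun h => hvw h.symm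
    simp only [hu, hw, if_true, if_false] at heq
    exact huw.ne (hσ (mem huv hu) (mem huw.symm hw) (add_left_cancel heq))
  by_cases hw : w = x
  · subst hw
    simp only [hu, hv, if_true, if_false] at heq
    exact huv.ne (hσ (mem huv hu) (mem huv.symm hv) (add_left_cancel heq).symm)
  simp only [hu, hv, hw, if_false] at heq
  exact hvw (hσ (mem huv.symm hv) (mem huw.symm hw) (add_left_cancel heq))

end SumColoring

theorem ZMod.intCast_injOn_Ico (n : ℕ) : Set.InjOn (Int.cast : ℤ → ZMod n) (Set.Ico 0 n) :=
  fun a ha b hb h => by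
    rwa [ZMod.intCast_eq_intCast_iff', Int.emod_eq_of_lt ha.1 ha.2,
      Int.emod_eq_of_lt hb.1 hb.2] at h

namespace HGraph

noncomputable def neighborsOfZero (i s m j : ℤ) : Finset ℤ :=
  (((Finset.Icc (-i) s).erase 0).erase (-m)).erase j

variable {i s m j : ℤ}

theorem adj_zero_of_mem_neighborsOfZero (hi : 0 ≤ i) (hs : 0 ≤ s) (hm : m ≠ 0)
    (hj : j ≠ 0) :
    ∀ v ∈ neighborsOfZero i s m j, (HGraph i s m j).Adj 0 v := by
  intro v hv
  simp only [neighborsOfZero, Finset.mem_erase, Finset.mem_Icc] at hv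
  simp only [HGraph, Set.mem_Icc]
  omega

theorem card_neighborsOfZero (hm : 0 < m) (hmi : m ≤ i) (hj : 0 < j) (hjs : j ≤ s) :
    ((neighborsOfZero i s m j).card : ℤ) = i + s - 2 := by
  have h0 : (0 : ℤ) ∈ Finset.Icc (-i) s := Finset.mem_Icc.mpr ⟨by omega, by omega⟩
  have hm' : -m ∈ (Finset.Icc (-i) s).erase 0 := by
    simp only [Finset.mem_erase, Finset.mem_Icc]; omega
  have hj' : j ∈ ((Finset.Icc (-i) s).erase 0).erase (-m) := by
    simp only [Finset.mem_erase, Finset.mem_Icc]; omega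
  rw [neighborsOfZero, Finset.card_erase_of_mem hj', Finset.card_erase_of_mem hm',
    Finset.card_erase_of_mem h0, Int.card_Icc]
  omega

end HGraph

/-- Maps the vertices of `H^{-3,s}_{m,j}` other than `s` bijectively onto `{0, …, s}`. -/
def relabel (j v : ℤ) : ℤ :=
  if v = 0 then 0 else if v = -3 then 1 else if v < 0 then 2 else if v < j then v + 2 else v + 1

theorem relabel_injOn {m j : ℤ} (hm : 1 ≤ m) (hm' : m ≤ 2) (hj : 1 ≤ j) :
    Set.InjOn (relabel j) {v | -3 ≤ v ∧ v ≠ -m ∧ v ≠ j} := by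
  rintro u ⟨hu, hum, huj⟩ v ⟨hv, hvm, hvj⟩ h
  simp only [relabel] at h
  split_ifs at h <;> omega

theorem relabel_mem_Ico {j s v : ℤ} (hj : 1 ≤ j) (hjs : j < s) (hv : v < s) :
    relabel j v ∈ Set.Ico 0 (s + 1) := by
  simp only [relabel, Set.mem_Ico]
  split_ifs <;> omega

theorem relabel_mem_Icc_of_nonpos {j v : ℤ} (hv : v ≤ 0) : relabel j v ∈ Set.Icc 0 2 := by
  simp only [relabel, Set.mem_Icc]
  split_ifs <;> omega

theorem isProperEdgeColoring_HGraph {s : ℕ} {m j : ℤ} (hs : 4 ≤ s) (hm : 1 ≤ m)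
    (hm' : m ≤ 2) (hj : 1 ≤ j) (hjs : j < s) :
    IsProperEdgeColoring (HGraph 3 s m j)
      (sumColoring (fun v => (relabel j v : ZMod (s + 1))) (s : ℤ)) := by
  have hcast := ZMod.intCast_injOn_Ico (s + 1)
  push_cast at hcast
  apply isProperEdgeColoring_sumColoring
  · rintro u ⟨⟨_, -, ⟨hu, hus⟩, -, -, hum, -, huj, -⟩, hu_ne⟩
      v ⟨⟨_, -, ⟨hv, hvs⟩, -, -, hvm, -, hvj, -⟩, hv_ne⟩ huv
    have hu_lt : u < s := lt_of_le_of_ne hus hu_ne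
    have hv_lt : v < s := lt_of_le_of_ne hvs hv_ne
    exact relabel_injOn hm hm' hj ⟨hu, hum, huj⟩ ⟨hv, hvm, hvj⟩
      (hcast (relabel_mem_Ico hj hjs hu_lt) (relabel_mem_Ico hj hjs hv_lt) huv)
  · rintro u ⟨-, -, ⟨hu, -⟩, ⟨-, hus⟩, -, hum, -, huj, -⟩
      v ⟨-, -, ⟨hv, -⟩, ⟨-, hvs⟩, -, hvm, -, hvj, -⟩ huv
    obtain ⟨hu0, hu2⟩ := relabel_mem_Icc_of_nonpos (j := j) (by omega : u ≤ 0)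
    obtain ⟨hv0, hv2⟩ := relabel_mem_Icc_of_nonpos (j := j) (by omega : v ≤ 0)
    simp only [← Int.cast_add] at huv
    have := hcast ⟨by omega, by omega⟩ ⟨by omega, by omega⟩ huv
    exact relabel_injOn hm hm' hj ⟨hu, hum, huj⟩ ⟨hv, hvm, hvj⟩ (by omega)

theorem chromaticIndex_H_3_s_m_j (s : ℕ) (hs : 4 ≤ s) (m j : ℤ)
    (hm : m ∈ ({1, 2} : Set ℤ)) (hj : j ∈ ({1, 2, 3} : Set ℤ)) :
    chromaticIndex (HGraph 3 (s : ℤ) m j) = s + 1 := by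
  simp only [Set.mem_insert_iff, Set.mem_singleton_iff] at hm hj
  have hs' : (4 : ℤ) ≤ s := by exact_mod_cast hs
  have hcard := HGraph.card_neighborsOfZero (i := 3) (s := s) (m := m) (j := j)
    (by omega) (by omega) (by omega) (by omega)
  rw [← ZMod.card (s + 1)]
  refine chromaticIndex_eq_card
    (isProperEdgeColoring_HGraph hs (by omega) (by omega) (by omega) (by omega))
    (HGraph.adj_zero_of_mem_neighborsOfZero (by omega) (by omega) (by omega) (by omega)) ?_
  rw [ZMod.card]
  omega
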